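/- arXiv:1403.6149 — 2 statements merged into one kernel-verified Lean document; each statement's English description precedes it below -/
import Mathlib

section
/- The quiver on 7 vertices with arrows 1→2, 2→3, 3→1, 3→4, 4→5, 5→3, 5→6, 6→7, 7→5 (three 3-cycles glued in a path at vertices 3 and 5) admits the maximal green sequence given by mutating at vertices in the order 1, 2, 3, 1, 4, 5, 3, 1, 6, 7, 5, 3, 1: each mutation occurs at a green vertex of the framed extended matrix and afterwards all seven mutable vertices are red. -/
/-- Mutation of a 7×14 extended matrix at mutable index `k`. -/
def mutE (B : Matrix (Fin 7) (Fin 14) ℤ) (k : Fin 7) : Matrix (Fin 7) (Fin 14) ℤ :=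
  Matrix.of fun i j =>
    if i = k ∨ (j : ℕ) = (k : ℕ) then -B i j
    else B i j + (|B i (Fin.castLE (by norm_num) k)| * B k j +
      B i (Fin.castLE (by norm_num) k) * |B k j|) / 2

def isGreen (B : Matrix (Fin 7) (Fin 14) ℤ) (i : Fin 7) : Prop :=
  ∀ j : Fin 14, 7 ≤ (j : ℕ) → 0 ≤ B i j

def isRed (B : Matrix (Fin 7) (Fin 14) ℤ) (i : Fin 7) : Prop :=
  ∀ j : Fin 14, 7 ≤ (j : ℕ) → B i j ≤ 0

/-- Each mutation in the list is performed at a vertex that is green at that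
moment. -/
def greenSeq (B : Matrix (Fin 7) (Fin 14) ℤ) : List (Fin 7) → Prop
  | [] => True
  | k :: ks => isGreen B k ∧ greenSeq (mutE B k) ks


instance (B : Matrix (Fin 7) (Fin 14) ℤ) (i : Fin 7) : Decidable (isGreen B i) := by
  unfold isGreen; infer_instance

instance (B : Matrix (Fin 7) (Fin 14) ℤ) (i : Fin 7) : Decidable (isRed B i) := by
  unfold isRed; infer_instance

def decGreenSeq (B : Matrix (Fin 7) (Fin 14) ℤ) :
    (l : List (Fin 7)) → Decidable (greenSeq B l)
  | [] => isTrue trivial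
  | _ :: ks => @instDecidableAnd _ _ _ (decGreenSeq _ ks)

instance (B : Matrix (Fin 7) (Fin 14) ℤ) (l : List (Fin 7)) :
    Decidable (greenSeq B l) := decGreenSeq B l

/-- Framed extended matrix of the quiver with arrows 1→2, 2→3, 3→1, 3→4, 4→5,
5→3, 5→6, 6→7, 7→5 (three 3-cycles glued in a path at vertices 3 and 5). -/
def B0 : Matrix (Fin 7) (Fin 14) ℤ :=
  !![0, 1, -1, 0, 0, 0, 0,   1, 0, 0, 0, 0, 0, 0;
     -1, 0, 1, 0, 0, 0, 0,   0, 1, 0, 0, 0, 0, 0;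
     1, -1, 0, 1, -1, 0, 0,  0, 0, 1, 0, 0, 0, 0;
     0, 0, -1, 0, 1, 0, 0,   0, 0, 0, 1, 0, 0, 0;
     0, 0, 1, -1, 0, 1, -1,  0, 0, 0, 0, 1, 0, 0;
     0, 0, 0, 0, -1, 0, 1,   0, 0, 0, 0, 0, 1, 0;
     0, 0, 0, 0, 1, -1, 0,   0, 0, 0, 0, 0, 0, 1]

/-- The associated mutation sequence, mutating at vertices
1, 2, 3, 1, 4, 5, 3, 1, 6, 7, 5, 3, 1 (0-indexed below), is a maximal green
sequence: every mutation is at a green vertex and afterwards all seven mutable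
vertices are red. -/
theorem threeTriangles_mgs_length13 :
    greenSeq B0 [0, 1, 2, 0, 3, 4, 2, 0, 5, 6, 4, 2, 0] ∧
    ∀ i : Fin 7,
      isRed (([0, 1, 2, 0, 3, 4, 2, 0, 5, 6, 4, 2, 0] : List (Fin 7)).foldl mutE B0) i := by
  decide
end

section
/- The quiver on 7 vertices with arrows 1→2, 2→3, 3→1, 3→4, 4→5, 5→3, 5→6, 6→7, 7→5 also admits the shorter maximal green sequence mutating at vertices in the order 7, 4, 1, 5, 2, 6, 7, 3, 4, 1, 3: each of these 11 mutations occurs at a green vertex and afterwards all seven mutable vertices are red. In particular, this quiver has a maximal green sequence of length 11, which is strictly shorter than its associated mutation sequence of length 13. -/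
/-- The same quiver admits the shorter maximal green sequence mutating at
vertices 7, 4, 1, 5, 2, 6, 7, 3, 4, 1, 3 (0-indexed below): each of these 11
mutations occurs at a green vertex, afterwards all seven mutable vertices are
red, and this sequence has length 11, strictly shorter than the associated
mutation sequence of length 13. -/
theorem threeTriangles_mgs_length11 :
    greenSeq B0 [6, 3, 0, 4, 1, 5, 6, 2, 3, 0, 2] ∧
    (∀ i : Fin 7,
      isRed (([6, 3, 0, 4, 1, 5, 6, 2, 3, 0, 2] : List (Fin 7)).foldl mutE B0) i) ∧
    ([6, 3, 0, 4, 1, 5, 6, 2, 3, 0, 2] : List (Fin 7)).length = 11 ∧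
    (11 : ℕ) < 13 := by
  refine ⟨?_, ?_, rfl, by norm_num⟩
  · simp only [greenSeq, isGreen, isRed, mutE, B0, List.foldl] ; decide
  · intro i
    fin_cases i <;> · simp only [greenSeq, isGreen, isRed, mutE, B0, List.foldl] ; decide
end
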